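/- Let S be a finite set of triangles with positive areas |τ|, f a simplicial map with positive image areas |f(τ)|, total areas |S| = ∑_τ |τ| and |f(S)| = ∑_τ |f(τ)|. Define the normalized authalic energy Ẽ_A(f) = (|S|/|f(S)|)·∑_τ |f(τ)|²/|τ| − |f(S)|. Then Ẽ_A(f) ≥ 0, and Ẽ_A(f) = 0 if and only if |f(τ)|/|τ| is constant over all τ (i.e., f is area-preserving up to a global scaling). -/

import Mathlib

lemma cs_identity {ι : Type*} [Fintype ι] (a r : ι → ℝ) :
    (∑ i, a i) * (∑ j, a j * r j ^ 2) - (∑ i, a i * r i) ^ 2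
      = (1/2) * ∑ i, ∑ j, a i * a j * (r i - r j) ^ 2 := by
  have h : ∀ i j : ι, a i * a j * (r i - r j) ^ 2
      = a i * (a j * r j ^ 2) + ((a i * r i ^ 2) * a j) - 2 * ((a i * r i) * (a j * r j)) := by
    intros; ring
  simp_rw [h, Finset.sum_sub_distrib, Finset.sum_add_distrib, ← Finset.mul_sum,
    ← Finset.sum_mul]
  ring

theorem normalized_authalic_energy_nonneg {ι : Type*} [Fintype ι] [Nonempty ι]
    (area imArea : ι → ℝ) (ha : ∀ τ, 0 < area τ) (hb : ∀ τ, 0 < imArea τ) :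
    0 ≤ ((∑ τ, area τ) / (∑ τ, imArea τ)) * (∑ τ, (imArea τ) ^ 2 / area τ)
        - (∑ τ, imArea τ) ∧
      (((∑ τ, area τ) / (∑ τ, imArea τ)) * (∑ τ, (imArea τ) ^ 2 / area τ)
          - (∑ τ, imArea τ) = 0 ↔ ∃ c : ℝ, ∀ τ, imArea τ / area τ = c) := by
  set r : ι → ℝ := fun i => imArea i / area i with hr
  have hane : ∀ i, area i ≠ 0 := fun i => (ha i).ne'
  have e2 : ∀ i, imArea i ^ 2 / area i = area i * r i ^ 2 := by
    intro i; simp only [hr]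
    rw [div_pow, sq (area i), ← div_div, mul_div_assoc', mul_div_cancel_left₀ _ (hane i)]
  have e3 : ∀ i, imArea i = area i * r i := by
    intro i; simp only [hr]
    rw [mul_div_assoc', mul_div_cancel_left₀ _ (hane i)]
  have hA : 0 < ∑ τ, area τ := Finset.sum_pos (fun i _ => ha i) Finset.univ_nonempty
  have hB : 0 < ∑ τ, imArea τ := Finset.sum_pos (fun i _ => hb i) Finset.univ_nonempty
  have hBr : (∑ τ, imArea τ) = ∑ τ, area τ * r τ := by
    exact Finset.sum_congr rfl fun i _ => e3 i
  have hexpr : ((∑ τ, area τ) / (∑ τ, imArea τ)) * (∑ τ, (imArea τ) ^ 2 / area τ)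
      - (∑ τ, imArea τ)
      = ((∑ τ, area τ) * (∑ τ, area τ * r τ ^ 2) - (∑ τ, imArea τ) ^ 2)
          / (∑ τ, imArea τ) := by
    rw [Finset.sum_congr rfl fun i _ => e2 i]
    field_simp
  have hkey : (∑ τ, area τ) * (∑ τ, area τ * r τ ^ 2) - (∑ τ, imArea τ) ^ 2
      = (1/2) * ∑ i, ∑ j, area i * area j * (r i - r j) ^ 2 := by
    rw [hBr]; exact cs_identity area r
  have hterm : ∀ i ∈ Finset.univ (α := ι), 0 ≤ ∑ j, area i * area j * (r i - r j) ^ 2 := by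
    intro i _
    exact Finset.sum_nonneg fun j _ => mul_nonneg (mul_nonneg (ha i).le (ha j).le) (sq_nonneg _)
  have hnn : 0 ≤ (∑ τ, area τ) * (∑ τ, area τ * r τ ^ 2) - (∑ τ, imArea τ) ^ 2 := by
    rw [hkey]
    exact mul_nonneg (by norm_num) (Finset.sum_nonneg hterm)
  constructor
  · rw [hexpr]; exact div_nonneg hnn hB.le
  · rw [hexpr, div_eq_zero_iff]
    constructor
    · rintro (h | h)
      · have hzero : ∑ i, ∑ j, area i * area j * (r i - r j) ^ 2 = 0 := by
          have := hkey ▸ h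
          linarith
        have hall : ∀ i ∈ Finset.univ (α := ι), ∀ j ∈ Finset.univ (α := ι),
            area i * area j * (r i - r j) ^ 2 = 0 := by
          intro i hi
          have := (Finset.sum_eq_zero_iff_of_nonneg hterm).mp hzero i hi
          intro j hj
          exact (Finset.sum_eq_zero_iff_of_nonneg
            (fun j _ => mul_nonneg (mul_nonneg (ha i).le (ha j).le) (sq_nonneg _))).mp this j hj
        obtain ⟨i0⟩ := (inferInstance : Nonempty ι)
        refine ⟨r i0, fun i => ?_⟩
        have h0 := hall i (Finset.mem_univ i) i0 (Finset.mem_univ i0)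
        have hpos : 0 < area i * area i0 := mul_pos (ha i) (ha i0)
        have : (r i - r i0) ^ 2 = 0 := by
          rcases mul_eq_zero.mp h0 with h' | h'
          · exact absurd h' hpos.ne'
          · exact h'
        have := pow_eq_zero_iff (n := 2) (by norm_num) |>.mp this
        linarith [sub_eq_zero.mp this]
      · exact absurd h hB.ne'
    · rintro ⟨c, hc⟩
      left
      rw [hkey]
      have : ∀ i j : ι, area i * area j * (r i - r j) ^ 2 = 0 := by
        intro i j; rw [hr] at *; simp [hc i, hc j]
      simp [this]
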